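/- arXiv:2512.03304 — 3 statements merged into one kernel-verified Lean document; each statement's English description precedes it below -/
import Mathlib

section
/- Let (X, dist) be a metric space, P a finite nonempty set of points, and T a set of ℓ centers produced by Gonzalez' farthest-point greedy algorithm on P (start with an arbitrary point and repeatedly add a point of P maximizing the distance to the current center set). Let r = max over v ∈ P of the distance from v to T. Then any two distinct points in T ∪ {s} are at distance at least r apart, where s is a point of P achieving the maximum distance r to T. -/
/-- `c` is a run of Gonzalez' farthest-point greedy algorithm on `P`:
`c 0 ∈ P`, and each next center `c (i+1)` is a point of `P` maximizing the distance to
the set of previously chosen centers. -/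
def IsGonzalez {X : Type*} [MetricSpace X] [DecidableEq X] (P : Finset X) (c : ℕ → X) : Prop :=
  c 0 ∈ P ∧ ∀ i : ℕ, c (i + 1) ∈ P ∧ ∀ v ∈ P,
    ((Finset.range (i + 1)).inf' ⟨i, Finset.self_mem_range_succ i⟩
        fun j => dist v (c j)) ≤
      ((Finset.range (i + 1)).inf' ⟨i, Finset.self_mem_range_succ i⟩
        fun j => dist (c (i + 1)) (c j))

/-- Let `T = {c 0, …, c (ℓ-1)}` be the centers produced by Gonzalez' algorithm on `P`, let
`r` be the covering radius of `T`, and let `s ∈ P` achieve it. Then any two distinct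
points of `T ∪ {s}` are at distance at least `r`. -/
theorem gonzalez_separation {X : Type*} [MetricSpace X] [DecidableEq X]
    (P : Finset X) (hP : P.Nonempty) (c : ℕ → X) (hc : IsGonzalez P c)
    (ℓ : ℕ) (hℓ : 0 < ℓ) (r : ℝ)
    (hr : r = P.sup' hP fun v =>
      (Finset.range ℓ).inf' (Finset.nonempty_range_iff.mpr hℓ.ne') fun j => dist v (c j))
    (s : X) (hs : s ∈ P)
    (hsmax : ((Finset.range ℓ).inf' (Finset.nonempty_range_iff.mpr hℓ.ne')
      fun j => dist s (c j)) = r) :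
    ∀ u ∈ insert s ((Finset.range ℓ).image c),
      ∀ v ∈ insert s ((Finset.range ℓ).image c), u ≠ v → r ≤ dist u v := by
  obtain ⟨hc0, hcs⟩ := hc
  -- r ≤ dist s (c i) for i < ℓ
  have hsr : ∀ i, i < ℓ → r ≤ dist s (c i) := by
    intro i hi
    rw [← hsmax]
    exact Finset.inf'_le _ (Finset.mem_range.mpr hi)
  -- r ≤ dist (c j) (c i) for i < j < ℓ
  have key : ∀ i j, i < j → j < ℓ → r ≤ dist (c j) (c i) := by
    intro i j hij hjl
    obtain ⟨t, rfl⟩ : ∃ t, j = t + 1 := ⟨j - 1, by omega⟩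
    have h1 := (hcs t).2 s hs
    have h2 : r ≤ (Finset.range (t + 1)).inf' ⟨t, Finset.self_mem_range_succ t⟩
        fun m => dist s (c m) := by
      apply Finset.le_inf'
      intro m hm
      exact hsr m (by simp at hm; omega)
    have h3 : ((Finset.range (t + 1)).inf' ⟨t, Finset.self_mem_range_succ t⟩
        fun m => dist (c (t + 1)) (c m)) ≤ dist (c (t + 1)) (c i) :=
      Finset.inf'_le _ (Finset.mem_range.mpr hij)
    linarith
  intro u hu v hv hne
  simp only [Finset.mem_insert, Finset.mem_image, Finset.mem_range] at hu hv
  rcases hu with rfl | ⟨i, hi, rfl⟩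
  · rcases hv with rfl | ⟨j, hj, rfl⟩
    · exact absurd rfl hne
    · exact hsr j hj
  · rcases hv with rfl | ⟨j, hj, rfl⟩
    · rw [dist_comm]; exact hsr i hi
    · rcases lt_trichotomy i j with h | h | h
      · rw [dist_comm]; exact key i j h hj
      · exact absurd (by rw [h]) hne
      · exact key j i h hi
end

section
/- Let P be a finite set in ℝ^d, ε ∈ (0,1/2), α ≥ 1, and f : ℝ^d → ℝ^k satisfying (1−ε)‖u−v‖₂ ≤ ‖f(u)−f(v)‖₂ ≤ (1+ε)‖u−v‖₂ for all u,v ∈ P. Suppose T' ⊆ f(P) is an α-approximate solution to the ℓ-center problem on f(P) with centers restricted to f(P), i.e., max_{v'∈f(P)} min_{u'∈T'} ‖v'−u'‖₂ ≤ α · max_{v'∈f(P)} min_{u'∈T₂} ‖v'−u'‖₂ for an optimal set T₂ ⊆ ℝ^k of ℓ points (one minimizing max_{v'∈f(P)} min_{u'∈T₂} ‖v'−u'‖₂). Let g : f(P) → P satisfy f∘g = id on f(P), and T = g(T'). Then max_{v∈P} min_{t∈T} ‖v−t‖₂ ≤ (1+ε)(1+2ε)α · min over ℓ-element sets T₁ ⊆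 ℝ^d of max_{v∈P} min_{u∈T₁} ‖v−u‖₂. -/
attribute [local instance] Classical.decEq

open Finset

attribute [local instance] Classical.decEq

local notation "⟪" x ", " y "⟫" => @inner ℝ _ _ x y

lemma kirszbraun_point {E F : Type*} [NormedAddCommGroup E] [InnerProductSpace ℝ E]
    [NormedAddCommGroup F] [InnerProductSpace ℝ F]
    (C : Finset E) (f : E → F) (L : ℝ) (hL : 0 ≤ L)
    (hf : ∀ v ∈ C, ∀ w ∈ C, ‖f v - f w‖ ≤ L * ‖v - w‖) (u : E) :
    ∃ t : F, ∀ v ∈ C, ‖f v - t‖ ≤ L * ‖v - u‖ := by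
  rcases C.eq_empty_or_nonempty with rfl | hC
  · exact ⟨0, by simp⟩
  classical
  set K : Set F := convexHull ℝ (↑(C.image f)) with hK
  have hKcomp : IsCompact K := (C.image f).finite_toSet.isCompact_convexHull ℝ
  obtain ⟨v₀, hv₀⟩ := id hC
  have hKne : K.Nonempty := ⟨f v₀, subset_convexHull ℝ _ (by simp [Finset.mem_image]; exact ⟨v₀, hv₀, rfl⟩)⟩
  set ψ : E → F → ℝ := fun v t => ‖f v - t‖ ^ 2 - L ^ 2 * ‖v - u‖ ^ 2 with hψ
  set φ : F → ℝ := fun t => C.sup' hC fun v => ψ v t with hφ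
  have hφc : Continuous φ := by
    rw [continuous_iff_continuousAt]
    intro x
    exact Filter.Tendsto.finset_sup'_nhds_apply hC fun i _ => by
      exact ((continuous_const.sub continuous_id).norm.pow 2 |>.sub continuous_const).tendsto x
  obtain ⟨t, htK, htmin⟩ := hKcomp.exists_isMinOn hKne hφc.continuousOn
  suffices hφ0 : φ t ≤ 0 by
    refine ⟨t, fun v hv => ?_⟩
    have h1 : ψ v t ≤ φ t := by
      simp only [hφ]; exact Finset.le_sup' (fun v => ψ v t) hv
    simp only [hψ] at h1
    nlinarith [norm_nonneg (f v - t), norm_nonneg (v - u), mul_nonneg hL (norm_nonneg (v - u))]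
  by_contra hpos
  push_neg at hpos
  set A := C.filter fun v => ψ v t = φ t with hA
  have hAne : A.Nonempty := by
    obtain ⟨v, hv, hve⟩ := Finset.exists_mem_eq_sup' hC fun v => ψ v t
    exact ⟨v, Finset.mem_filter.mpr ⟨hv, hve.symm⟩⟩
  have hAC : A ⊆ C := Finset.filter_subset _ _
  set H : Set F := convexHull ℝ (↑(A.image f)) with hH
  have hHK : H ⊆ K := convexHull_mono (by exact_mod_cast Finset.coe_subset.mpr (Finset.image_subset_image hAC))
  have hHcomp : IsCompact H := (A.image f).finite_toSet.isCompact_convexHull ℝ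
  have hHconv : Convex ℝ H := convex_convexHull ℝ _
  have hHne : H.Nonempty := hAne.elim fun v hv =>
    ⟨f v, subset_convexHull ℝ _ (by exact_mod_cast Finset.mem_image_of_mem f hv)⟩
  have htH : t ∈ H := by
    by_contra htH
    obtain ⟨p, hpH, hp⟩ := exists_norm_eq_iInf_of_complete_convex hHne hHcomp.isComplete hHconv t
    have hproj : ∀ y ∈ H, ⟪t - p, y - p⟫ ≤ 0 :=
      (norm_eq_iInf_iff_real_inner_le_zero hHconv hpH).mp hp
    set w := p - t with hwdef
    have hpt : p ≠ t := fun h => htH (h ▸ hpH)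
    have hw2 : 0 < ‖w‖ ^ 2 := by
      have h := norm_pos_iff.mpr (sub_ne_zero.mpr hpt)
      positivity
    have key : ∀ v ∈ A, ‖w‖ ^ 2 ≤ ⟪f v - t, w⟫ := by
      intro v hv
      have hfvH : f v ∈ H := subset_convexHull ℝ _ (by exact_mod_cast Finset.mem_image_of_mem f hv)
      have h1 : ⟪t - p, f v - p⟫ ≤ 0 := hproj _ hfvH
      have hdec : f v - t = (f v - p) + w := by rw [hwdef]; abel
      have h2 : ⟪f v - t, w⟫ = ⟪f v - p, w⟫ + ⟪w, w⟫ := by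
        rw [hdec, inner_add_left]
      have h3 : (0:ℝ) ≤ ⟪f v - p, w⟫ := by
        have hwe : w = -(t - p) := by rw [hwdef]; abel
        have : ⟪f v - p, w⟫ = -⟪t - p, f v - p⟫ := by
          rw [hwe, inner_neg_right, real_inner_comm]
        linarith [this ▸ neg_nonneg.mpr h1]
      rw [real_inner_self_eq_norm_sq] at h2
      linarith [h2, h3]
    -- gap for inactive points
    obtain ⟨γ, hγ0, hγ⟩ : ∃ γ > 0, ∀ v ∈ C, v ∉ A → ψ v t ≤ φ t - γ := by
      rcases (C.filter fun v => v ∉ A).eq_empty_or_nonempty with he | hne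
      · refine ⟨1, one_pos, fun v hv hva => ?_⟩
        have hmem : v ∈ C.filter fun v => v ∉ A := Finset.mem_filter.mpr ⟨hv, hva⟩
        rw [he] at hmem
        exact absurd hmem (Finset.notMem_empty v)
      · refine ⟨φ t - (C.filter fun v => v ∉ A).sup' hne (fun v => ψ v t), ?_, ?_⟩
        · have hlt : (C.filter fun v => v ∉ A).sup' hne (fun v => ψ v t) < φ t := by
            rw [Finset.sup'_lt_iff]
            intro v hv
            obtain ⟨hvC, hvA⟩ := Finset.mem_filter.mp hv
            have h1 : ψ v t ≤ φ t := by
              simp only [hφ]; exact Finset.le_sup' (fun v => ψ v t) hvC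
            have h2 : ψ v t ≠ φ t := fun h => hvA (Finset.mem_filter.mpr ⟨hvC, h⟩)
            exact lt_of_le_of_ne h1 h2
          linarith
        · intro v hv hva
          have hmem : v ∈ C.filter fun v => v ∉ A := Finset.mem_filter.mpr ⟨hv, hva⟩
          have := Finset.le_sup' (fun v => ψ v t) hmem
          linarith
    set M := C.sup' hC fun v => 2*‖f v - t‖*‖w‖ + ‖w‖^2 with hM
    have hM0 : 0 < M := by
      have h1 : 2*‖f v₀ - t‖*‖w‖ + ‖w‖^2 ≤ M := by
        rw [hM]; exact Finset.le_sup' (fun v => 2*‖f v - t‖*‖w‖ + ‖w‖^2) hv₀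
      nlinarith [norm_nonneg (f v₀ - t), norm_nonneg w, hw2]
    set s : ℝ := min 1 (γ / (2*M)) with hs
    have hs0 : 0 < s := lt_min one_pos (by positivity)
    have hs1 : s ≤ 1 := min_le_left _ _
    have hsM : s * M ≤ γ/2 := by
      have h1 : s ≤ γ/(2*M) := min_le_right _ _
      calc s*M ≤ (γ/(2*M))*M := mul_le_mul_of_nonneg_right h1 hM0.le
      _ = γ/2 := by field_simp
    have hssq : s^2 ≤ s := by nlinarith
    set t' := t + s • w with ht'
    have hKconv : Convex ℝ K := convex_convexHull ℝ _
    have ht'K : t' ∈ K := by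
      have hpK : p ∈ K := hHK hpH
      have hcomb : (1-s)•t + s•p ∈ K := hKconv htK hpK (by linarith) hs0.le (by ring)
      have he : t' = (1-s)•t + s•p := by rw [ht', hwdef]; module
      rw [he]; exact hcomb
    have hφ' : φ t' < φ t := by
      have hgoal : ∀ v ∈ C, ψ v t' < φ t := by
        intro v hv
        have hfvt : f v - t' = (f v - t) - s • w := by rw [ht']; abel
        have hexp : ψ v t' = ψ v t - 2*(s*⟪f v - t, w⟫) + s^2*‖w‖^2 := by
          simp only [hψ]
          rw [hfvt, norm_sub_sq_real, real_inner_smul_right, norm_smul, mul_pow,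
            Real.norm_eq_abs, sq_abs]
          ring
        have hA3 : s^2*‖w‖^2 ≤ s*‖w‖^2 :=
          mul_le_mul_of_nonneg_right hssq (by positivity)
        by_cases hvA : v ∈ A
        · have hkey := key v hvA
          have hval : ψ v t = φ t := (Finset.mem_filter.mp hvA).2
          have hB1 : s*‖w‖^2 ≤ s*⟪f v - t, w⟫ :=
            mul_le_mul_of_nonneg_left hkey hs0.le
          have hspos : 0 < s*‖w‖^2 := mul_pos hs0 hw2
          linarith
        · have hgap := hγ v hv hvA
          have habs0 : -⟪f v - t, w⟫ ≤ ‖f v - t‖*‖w‖ :=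
            (neg_le_abs _).trans (abs_real_inner_le_norm (f v - t) w)
          have hA2 : -(s*⟪f v - t, w⟫) ≤ s*(‖f v - t‖*‖w‖) := by
            rw [← mul_neg]
            exact mul_le_mul_of_nonneg_left habs0 hs0.le
          have hMv : 2*‖f v - t‖*‖w‖ + ‖w‖^2 ≤ M := by
            rw [hM]; exact Finset.le_sup' (fun v => 2*‖f v - t‖*‖w‖ + ‖w‖^2) hv
          have hA1 : s*(2*‖f v - t‖*‖w‖ + ‖w‖^2) ≤ s*M :=
            mul_le_mul_of_nonneg_left hMv hs0.le
          nlinarith [hexp, hgap, hA2, hA1, hA3, hsM, hγ0]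
      simp only [hφ]
      rw [Finset.sup'_lt_iff]
      exact hgoal
    exact absurd (isMinOn_iff.mp htmin t' ht'K) (not_le.mpr hφ')
  -- now t is a convex combination of active image points; derive contradiction
  rw [hH, Finset.convexHull_eq] at htH
  obtain ⟨c, hc0, hc1, hcc⟩ := htH
  rw [Finset.centerMass_eq_of_sum_1 _ _ hc1] at hcc
  simp only [id_eq] at hcc
  set B := A.image f with hB
  have hsel : ∀ y ∈ B, ∃ v, v ∈ A ∧ f v = y := fun y hy => by
    obtain ⟨v, hv, hfv⟩ := Finset.mem_image.mp hy; exact ⟨v, hv, hfv⟩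
  choose! sel hselA hself using hsel
  have hpair : ∀ y ∈ B, ∀ z ∈ B,
      φ t + L^2 * ⟪sel y - u, sel z - u⟫ ≤ ⟪y - t, z - t⟫ := by
    intro y hy z hz
    have hyA := hselA y hy; have hzA := hselA z hz
    have hyv : ψ (sel y) t = φ t := (Finset.mem_filter.mp hyA).2
    have hzv : ψ (sel z) t = φ t := (Finset.mem_filter.mp hzA).2
    simp only [hψ] at hyv hzv
    rw [hself y hy] at hyv
    rw [hself z hz] at hzv
    have hfyz : ‖y - z‖ ≤ L * ‖sel y - sel z‖ := by
      have h := hf (sel y) (hAC hyA) (sel z) (hAC hzA)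
      rwa [hself y hy, hself z hz] at h
    have h3 : ‖y - z‖^2 ≤ L^2 * ‖sel y - sel z‖^2 := by
      nlinarith [norm_nonneg (y - z), mul_nonneg hL (norm_nonneg (sel y - sel z))]
    have e1 : ‖y - z‖^2 = ‖y - t‖^2 - 2*⟪y - t, z - t⟫ + ‖z - t‖^2 := by
      have h := norm_sub_sq_real (y - t) (z - t)
      rwa [sub_sub_sub_cancel_right] at h
    have e2 : L^2*‖sel y - sel z‖^2
        = L^2*‖sel y - u‖^2 - 2*(L^2*⟪sel y - u, sel z - u⟫) + L^2*‖sel z - u‖^2 := by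
      have h := norm_sub_sq_real (sel y - u) (sel z - u)
      rw [sub_sub_sub_cancel_right] at h
      rw [h]; ring
    linarith [e1, e2, h3, hyv, hzv]
  have h0 : ∑ y ∈ B, c y • (y - t) = (0:F) := by
    simp only [smul_sub]
    rw [Finset.sum_sub_distrib, hcc, ← Finset.sum_smul, hc1, one_smul, sub_self]
  have hzero : (0:ℝ) = ∑ y ∈ B, ∑ z ∈ B, (c y * c z) * ⟪y - t, z - t⟫ := by
    calc (0:ℝ) = ⟪∑ y ∈ B, c y • (y - t), ∑ z ∈ B, c z • (z - t)⟫ := by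
          rw [h0, inner_zero_left]
    _ = ∑ y ∈ B, ∑ z ∈ B, (c y * c z) * ⟪y - t, z - t⟫ := by
          rw [sum_inner]
          refine Finset.sum_congr rfl fun y hy => ?_
          rw [real_inner_smul_left, inner_sum, Finset.mul_sum]
          refine Finset.sum_congr rfl fun z hz => ?_
          rw [real_inner_smul_right]; ring
  have hlb : ∑ y ∈ B, ∑ z ∈ B, (c y * c z) * (φ t + L^2 * ⟪sel y - u, sel z - u⟫)
      ≤ ∑ y ∈ B, ∑ z ∈ B, (c y * c z) * ⟪y - t, z - t⟫ :=
    Finset.sum_le_sum fun y hy => Finset.sum_le_sum fun z hz =>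
      mul_le_mul_of_nonneg_left (hpair y hy z hz) (mul_nonneg (hc0 y hy) (hc0 z hz))
  have h1 : ∑ y ∈ B, ∑ z ∈ B, (c y * c z) * φ t = φ t := by
    calc ∑ y ∈ B, ∑ z ∈ B, (c y * c z) * φ t
        = ∑ y ∈ B, c y * ((∑ z ∈ B, c z) * φ t) := by
          refine Finset.sum_congr rfl fun y hy => ?_
          rw [Finset.sum_mul, Finset.mul_sum]
          exact Finset.sum_congr rfl fun z hz => by ring
    _ = φ t := by rw [hc1, ← Finset.sum_mul, hc1]; ring
  have hinner : ∑ y ∈ B, ∑ z ∈ B, (c y * c z) * ⟪sel y - u, sel z - u⟫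
      = ⟪∑ y ∈ B, c y • (sel y - u), ∑ z ∈ B, c z • (sel z - u)⟫ := by
    rw [sum_inner]
    refine Finset.sum_congr rfl fun y hy => ?_
    rw [real_inner_smul_left, inner_sum, Finset.mul_sum]
    refine Finset.sum_congr rfl fun z hz => ?_
    rw [real_inner_smul_right]; ring
  have hsplit : ∑ y ∈ B, ∑ z ∈ B, (c y * c z) * (φ t + L^2 * ⟪sel y - u, sel z - u⟫)
      = φ t + L^2 * ‖∑ y ∈ B, c y • (sel y - u)‖^2 := by
    calc ∑ y ∈ B, ∑ z ∈ B, (c y * c z) * (φ t + L ^ 2 * ⟪sel y - u, sel z - u⟫)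
        = (∑ y ∈ B, ∑ z ∈ B, (c y * c z) * φ t)
          + L^2 * (∑ y ∈ B, ∑ z ∈ B, (c y * c z) * ⟪sel y - u, sel z - u⟫) := by
          rw [Finset.mul_sum, ← Finset.sum_add_distrib]
          refine Finset.sum_congr rfl fun y hy => ?_
          rw [Finset.mul_sum, ← Finset.sum_add_distrib]
          exact Finset.sum_congr rfl fun z hz => by ring
    _ = φ t + L^2 * ‖∑ y ∈ B, c y • (sel y - u)‖^2 := by
          rw [h1, hinner, real_inner_self_eq_norm_sq]
  have hnn : (0:ℝ) ≤ L^2 * ‖∑ y ∈ B, c y • (sel y - u)‖^2 := by positivity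
  rw [hsplit] at hlb
  linarith [hzero ▸ hlb]

/-- Approximation guarantee of the procedure `DIMREDCENTER`: if `T'` is an `α`-approximate
set of `ℓ` centers for `f(P)` in the reduced space, then its pullback `T = g(T')` is a
`(1+ε)(1+2ε)α`-approximate set of centers for `P` in the original space. -/
theorem dimredcenter_approx (d k ℓ : ℕ) (ε α : ℝ)
    (hε : ε ∈ Set.Ioo (0 : ℝ) (1/2)) (hα : 1 ≤ α)
    (P : Finset (EuclideanSpace ℝ (Fin d))) (hP : P.Nonempty)
    (f : EuclideanSpace ℝ (Fin d) → EuclideanSpace ℝ (Fin k))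
    (hf : ∀ u ∈ P, ∀ v ∈ P,
      (1 - ε) * ‖u - v‖ ≤ ‖f u - f v‖ ∧ ‖f u - f v‖ ≤ (1 + ε) * ‖u - v‖)
    (g : EuclideanSpace ℝ (Fin k) → EuclideanSpace ℝ (Fin d))
    (hg : ∀ v' ∈ P.image f, g v' ∈ P ∧ f (g v') = v')
    (T' : Finset (EuclideanSpace ℝ (Fin k))) (hT'P : T' ⊆ P.image f)
    (hT' : T'.Nonempty) (hT'card : T'.card = ℓ)
    (happrox : ∀ T₂ : Finset (EuclideanSpace ℝ (Fin k)), T₂.card = ℓ →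
      ∀ hT₂ : T₂.Nonempty,
        ((P.image f).sup' (hP.image f) fun v' => T'.inf' hT' fun u' => ‖v' - u'‖) ≤
          α * ((P.image f).sup' (hP.image f) fun v' => T₂.inf' hT₂ fun u' => ‖v' - u'‖)) :
    ∀ T₁ : Finset (EuclideanSpace ℝ (Fin d)), T₁.card = ℓ → ∀ hT₁ : T₁.Nonempty,
      (P.sup' hP fun v => (T'.image g).inf' (hT'.image g) fun t => ‖v - t‖) ≤
        (1 + ε) * (1 + 2 * ε) * α *
          (P.sup' hP fun v => T₁.inf' hT₁ fun u => ‖v - u‖) := by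
  obtain ⟨hε0, hε2⟩ := hε
  intro T₁ hT₁card hT₁
  set r := P.sup' hP fun v => T₁.inf' hT₁ fun u => ‖v - u‖ with hr
  have hr0 : 0 ≤ r := by
    obtain ⟨v₀, hv₀⟩ := id hP
    have h1 : (0:ℝ) ≤ T₁.inf' hT₁ fun u => ‖v₀ - u‖ :=
      Finset.le_inf' hT₁ _ fun u hu => norm_nonneg _
    exact h1.trans (Finset.le_sup' (fun v => T₁.inf' hT₁ fun u => ‖v - u‖) hv₀)
  -- Kirszbraun centers in the reduced space
  have hk : ∀ u : EuclideanSpace ℝ (Fin d), ∃ t : EuclideanSpace ℝ (Fin k),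
      ∀ v ∈ P, ‖f v - t‖ ≤ (1 + ε) * ‖v - u‖ := fun u =>
    kirszbraun_point P f (1 + ε) (by linarith) (fun v hv w hw => (hf v hv w hw).2) u
  choose t ht using hk
  -- build the comparison center set T₂ in the reduced space
  have hScard : (T₁.image t).card ≤ ℓ := hT₁card ▸ Finset.card_image_le
  have hUcard : ℓ ≤ ((T₁.image t) ∪ T').card :=
    hT'card ▸ Finset.card_le_card Finset.subset_union_right
  obtain ⟨T₂, hST₂, hT₂U, hT₂card⟩ :=
    Finset.exists_subsuperset_card_eq Finset.subset_union_left hScard hUcard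
  have hT₂ne : T₂.Nonempty := (hT₁.image t).mono hST₂
  -- key quantities
  set D := (P.image f).sup' (hP.image f) fun v' => T₂.inf' hT₂ne fun u' => ‖v' - u'‖ with hD
  have step4 : D ≤ (1 + ε) * r := by
    apply Finset.sup'_le
    intro v' hv'
    obtain ⟨wv, hwv, rfl⟩ := Finset.mem_image.mp hv'
    obtain ⟨u, hu, heu⟩ := Finset.exists_mem_eq_inf' hT₁ fun u => ‖wv - u‖
    have h1 : (T₂.inf' hT₂ne fun u' => ‖f wv - u'‖) ≤ ‖f wv - t u‖ :=
      Finset.inf'_le _ (hST₂ (Finset.mem_image_of_mem t hu))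
    have h2 : ‖f wv - t u‖ ≤ (1 + ε) * ‖wv - u‖ := ht u wv hwv
    have h4 : (T₁.inf' hT₁ fun u => ‖wv - u‖) ≤ r :=
      Finset.le_sup' (fun v => T₁.inf' hT₁ fun u => ‖v - u‖) hwv
    have h5 : ‖wv - u‖ ≤ r := heu ▸ h4
    calc (T₂.inf' hT₂ne fun u' => ‖f wv - u'‖) ≤ (1 + ε) * ‖wv - u‖ := h1.trans h2
    _ ≤ (1 + ε) * r := by nlinarith
  have step3 := happrox T₂ hT₂card hT₂ne
  -- pointwise bound
  apply Finset.sup'_le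
  intro v hv
  obtain ⟨u', hu', he⟩ := Finset.exists_mem_eq_inf' hT' fun u' => ‖f v - u'‖
  have hgu' := hg u' (hT'P hu')
  have hlip := (hf v hv (g u') hgu'.1).1
  rw [hgu'.2] at hlip
  have hB0 : (0:ℝ) ≤ T'.inf' hT' fun u' => ‖f v - u'‖ :=
    Finset.le_inf' hT' _ fun x hx => norm_nonneg _
  have step1 : ((T'.image g).inf' (hT'.image g) fun tt => ‖v - tt‖)
      ≤ (1 + 2 * ε) * T'.inf' hT' fun u' => ‖f v - u'‖ := by
    have hle : ‖v - g u'‖ ≤ (1 + 2 * ε) * ‖f v - u'‖ := by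
      by_contra hcon
      push_neg at hcon
      have h1 : (1 - ε) * ((1 + 2 * ε) * ‖f v - u'‖) < (1 - ε) * ‖v - g u'‖ :=
        mul_lt_mul_of_pos_left hcon (by linarith)
      nlinarith [mul_nonneg (mul_nonneg hε0.le (by linarith : (0:ℝ) ≤ 1 - 2*ε))
        (norm_nonneg (f v - u'))]
    calc ((T'.image g).inf' (hT'.image g) fun tt => ‖v - tt‖) ≤ ‖v - g u'‖ :=
        Finset.inf'_le _ (Finset.mem_image_of_mem g hu')
    _ ≤ (1 + 2 * ε) * ‖f v - u'‖ := hle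
    _ = (1 + 2 * ε) * T'.inf' hT' fun u' => ‖f v - u'‖ := by rw [he]
  have step2 : (T'.inf' hT' fun u' => ‖f v - u'‖)
      ≤ (P.image f).sup' (hP.image f) fun v' => T'.inf' hT' fun u' => ‖v' - u'‖ :=
    Finset.le_sup' (fun v' => T'.inf' hT' fun u' => ‖v' - u'‖) (Finset.mem_image_of_mem f hv)
  have h2ε : (0:ℝ) ≤ 1 + 2 * ε := by linarith
  have hα0 : (0:ℝ) ≤ α := by linarith
  calc ((T'.image g).inf' (hT'.image g) fun tt => ‖v - tt‖)
      ≤ (1 + 2 * ε) * T'.inf' hT' fun u' => ‖f v - u'‖ := step1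
  _ ≤ (1 + 2 * ε) *
      ((P.image f).sup' (hP.image f) fun v' => T'.inf' hT' fun u' => ‖v' - u'‖) :=
      mul_le_mul_of_nonneg_left step2 h2ε
  _ ≤ (1 + 2 * ε) * (α * D) := mul_le_mul_of_nonneg_left step3 h2ε
  _ ≤ (1 + 2 * ε) * (α * ((1 + ε) * r)) := by
      have := mul_le_mul_of_nonneg_left step4 hα0
      exact mul_le_mul_of_nonneg_left this h2ε
  _ = (1 + ε) * (1 + 2 * ε) * α * r := by ring
end

section
/- Let (X, dist) be a metric space and P a finite set of points. Fix r > 0 and for each p ∈ P let B(p) = {q ∈ P : dist(p,q) ≤ r} and E(p) = {q ∈ P : dist(p,q) ≤ 3r}. Run the greedy procedure: ℓ times, pick the point p whose ball B(p) (restricted to unmarked points) has maximum cardinality, then mark all unmarked points of E(p). If there exist ℓ points t₁,…,t_ℓ of P such that the balls {q ∈ P : dist(tᵢ,q) ≤ r} cover at least n−z points of P, then the greedy procedure marks at least n−z points. -/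
attribute [local instance] Classical.propDecidable

/-!
Keep a set `V` of optimal balls whose points are not yet accounted for, with `|V| + i ≤ ℓ`
after `i` greedy steps and every point covered by the optimal solution lying in `M i` or in a
ball of `V`. At step `i` the greedy ball `B` either meets some ball of `V`, and then the `3r`-ball
marked around its centre swallows every ball of `V` that `B` meets; or `B` misses all of them,
and then the points of `B` newly marked pay for the unmarked points of any one ball of `V`,
since `B` was chosen of maximal unmarked size. Either way `V` loses a ball and the count of
accounted points does not drop, so after `ℓ` steps `V = ∅`.
-/

open Finset

section CoveringStep

variable {α ι : Type*} [DecidableEq α]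
  {M M' B : Finset α} {T : ι → Finset α} {V : Finset ι}

theorem union_biUnion_subset_union_biUnion_filter_disjoint (hMM' : M ⊆ M')
    (hmeet : ∀ j ∈ V, ¬Disjoint B (T j) → T j ⊆ M') :
    M ∪ V.biUnion T ⊆ M' ∪ (V.filter fun j => Disjoint B (T j)).biUnion T := by
  intro q hq
  rcases mem_union.1 hq with hqM | hqV
  · exact mem_union_left _ (hMM' hqM)
  · obtain ⟨j, hjV, hqT⟩ := mem_biUnion.1 hqV
    by_cases hdisj : Disjoint B (T j)
    · exact mem_union_right _ (mem_biUnion.2 ⟨j, mem_filter.2 ⟨hjV, hdisj⟩, hqT⟩)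
    · exact mem_union_left _ (hmeet j hjV hdisj hqT)

theorem card_union_biUnion_le_card_union_biUnion_erase [DecidableEq ι] {j₀ : ι}
    (hMM' : M ⊆ M') (hBM' : B ⊆ M') (hdisj : ∀ j ∈ V, Disjoint B (T j))
    (hmax : #(T j₀ \ M) ≤ #(B \ M)) :
    #(M ∪ V.biUnion T) ≤ #(M' ∪ (V.erase j₀).biUnion T) := by
  set A := M ∪ (V.erase j₀).biUnion T
  have hold : M ∪ V.biUnion T ⊆ A ∪ (T j₀ \ M) := by
    intro q hq
    simp only [A, mem_union, mem_biUnion, mem_erase, mem_sdiff] at hq ⊢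
    grind
  have hnew : A ∪ (B \ M) ⊆ M' ∪ (V.erase j₀).biUnion T :=
    union_subset (union_subset_union hMM' subset_rfl)
      (sdiff_subset.trans (hBM'.trans subset_union_left))
  have hdisjA : Disjoint A (B \ M) := by
    refine disjoint_union_left.2
      ⟨disjoint_sdiff, (disjoint_biUnion_left _ _ _).2 fun j hj => ?_⟩
    exact (hdisj j (mem_of_mem_erase hj)).symm.mono_right sdiff_subset
  calc #(M ∪ V.biUnion T) ≤ #(A ∪ (T j₀ \ M)) := card_le_card hold
    _ ≤ #A + #(T j₀ \ M) := card_union_le _ _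
    _ ≤ #A + #(B \ M) := Nat.add_le_add_left hmax _
    _ = #(A ∪ (B \ M)) := (card_union_eq_card_add_card.2 hdisjA).symm
    _ ≤ #(M' ∪ (V.erase j₀).biUnion T) := card_le_card hnew

theorem exists_card_union_biUnion_le [DecidableEq ι] (hMM' : M ⊆ M') (hBM' : B ⊆ M')
    (hmeet : ∀ j ∈ V, ¬Disjoint B (T j) → T j ⊆ M')
    (hmax : ∀ j ∈ V, #(T j \ M) ≤ #(B \ M)) :
    ∃ V' : Finset ι, #V' ≤ #V - 1 ∧ #(M ∪ V.biUnion T) ≤ #(M' ∪ V'.biUnion T) := by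
  by_cases hmeets : ∃ j₀ ∈ V, ¬Disjoint B (T j₀)
  · obtain ⟨j₀, hj₀, hmeet₀⟩ := hmeets
    refine ⟨V.filter fun j => Disjoint B (T j), ?_,
      card_le_card (union_biUnion_subset_union_biUnion_filter_disjoint hMM' hmeet)⟩
    rw [← card_erase_of_mem hj₀]
    exact card_le_card fun j hj => mem_erase.2
      ⟨fun h => hmeet₀ (h ▸ (mem_filter.1 hj).2), (mem_filter.1 hj).1⟩
  · push Not at hmeets
    rcases V.eq_empty_or_nonempty with rfl | ⟨j₀, hj₀⟩
    · exact ⟨∅, by simp, card_le_card (union_subset_union hMM' subset_rfl)⟩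
    · exact ⟨V.erase j₀, (card_erase_of_mem hj₀).le,
        card_union_biUnion_le_card_union_biUnion_erase hMM' hBM' hmeets (hmax j₀ hj₀)⟩

end CoveringStep

theorem card_biUnion_univ_le_of_exists_step {α ι : Type*} [DecidableEq α] [Fintype ι]
    {T : ι → Finset α} {M : ℕ → Finset α} {ℓ : ℕ}
    (hcard : Fintype.card ι ≤ ℓ)
    (hstep : ∀ i < ℓ, ∀ V : Finset ι, ∃ V' : Finset ι,
      #V' ≤ #V - 1 ∧ #(M i ∪ V.biUnion T) ≤ #(M (i + 1) ∪ V'.biUnion T)) :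
    #(univ.biUnion T) ≤ #(M ℓ) := by
  have hinv : ∀ i ≤ ℓ, ∃ V : Finset ι,
      #V + i ≤ ℓ ∧ #(univ.biUnion T) ≤ #(M i ∪ V.biUnion T) := by
    intro i
    induction i with
    | zero => exact fun _ => ⟨univ, by simpa using hcard, card_le_card subset_union_right⟩
    | succ i ih =>
      intro hi
      obtain ⟨V, hVcard, hV⟩ := ih (by omega)
      obtain ⟨V', hV'card, hV'⟩ := hstep i (by omega) V
      exact ⟨V', by omega, hV.trans hV'⟩
  obtain ⟨V, hVcard, hV⟩ := hinv ℓ le_rfl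
  rwa [card_eq_zero.1 (by omega : #V = 0), biUnion_empty, union_empty] at hV

section Metric

variable {X : Type*} [PseudoMetricSpace X]

noncomputable def pointsWithin (P : Finset X) (x : X) (r : ℝ) : Finset X :=
  P.filter fun y => dist x y ≤ r

theorem pointsWithin_subset_three_mul (P : Finset X) (x : X) (r : ℝ) :
    pointsWithin P x r ⊆ pointsWithin P x (3 * r) := by
  intro y hy
  obtain ⟨hyP, hxy⟩ := mem_filter.1 hy
  exact mem_filter.2 ⟨hyP, by linarith [dist_nonneg (x := x) (y := y)]⟩

theorem pointsWithin_subset_three_mul_of_not_disjoint {P : Finset X} {x y : X} {r : ℝ}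
    (h : ¬Disjoint (pointsWithin P x r) (pointsWithin P y r)) :
    pointsWithin P y r ⊆ pointsWithin P x (3 * r) := by
  obtain ⟨a, hxa, hya⟩ := not_disjoint_iff.1 h
  intro q hq
  obtain ⟨hqP, hyq⟩ := mem_filter.1 hq
  refine mem_filter.2 ⟨hqP, ?_⟩
  calc dist x q ≤ dist x a + dist a y + dist y q := dist_triangle4 x a y q
    _ ≤ r + r + r := by
      gcongr
      · exact (mem_filter.1 hxa).2
      · exact dist_comm a y ▸ (mem_filter.1 hya).2
    _ = 3 * r := by ring

theorem exists_card_union_biUnion_pointsWithin_le {ι : Type*} [DecidableEq ι] {P M : Finset X}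
    {r : ℝ} {p : X} {t : ι → X} (ht : ∀ j, t j ∈ P)
    (hmax : ∀ x ∈ P, #(pointsWithin P x r \ M) ≤ #(pointsWithin P p r \ M)) (V : Finset ι) :
    ∃ V' : Finset ι, #V' ≤ #V - 1 ∧
      #(M ∪ V.biUnion fun j => pointsWithin P (t j) r) ≤
        #((M ∪ pointsWithin P p (3 * r)) ∪ V'.biUnion fun j => pointsWithin P (t j) r) :=
  exists_card_union_biUnion_le subset_union_left
    ((pointsWithin_subset_three_mul P p r).trans subset_union_right)
    (fun _ _ h => (pointsWithin_subset_three_mul_of_not_disjoint h).trans subset_union_right)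
    (fun j _ => hmax (t j) (ht j))

end Metric

theorem greedy_outliers_correct_general {X : Type*} [MetricSpace X]
    (P : Finset X) (ℓ z : ℕ) (r : ℝ)
    (p : ℕ → X) (M : ℕ → Finset X)
    (hpick : ∀ i < ℓ, p i ∈ P ∧
      (∀ x ∈ P, ((P.filter fun y => dist x y ≤ r) \ M i).card ≤
        ((P.filter fun y => dist (p i) y ≤ r) \ M i).card) ∧
      M (i + 1) = M i ∪ (P.filter fun y => dist (p i) y ≤ 3 * r))
    (t : Fin ℓ → X) (ht : ∀ i, t i ∈ P)
    (hcov : P.card - z ≤ (P.filter fun q => ∃ i, dist (t i) q ≤ r).card) :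
    P.card - z ≤ (M ℓ).card := by
  have hcovered : (P.filter fun q => ∃ i, dist (t i) q ≤ r) ⊆
      univ.biUnion fun j => pointsWithin P (t j) r := by
    intro q hq
    obtain ⟨hqP, j, hj⟩ := mem_filter.1 hq
    exact mem_biUnion.2 ⟨j, mem_univ j, mem_filter.2 ⟨hqP, hj⟩⟩
  refine hcov.trans ((card_le_card hcovered).trans ?_)
  refine card_biUnion_univ_le_of_exists_step (Fintype.card_fin ℓ).le fun i hi V => ?_
  obtain ⟨-, hmax, hM⟩ := hpick i hi
  rw [hM]
  exact exists_card_union_biUnion_pointsWithin_le ht hmax V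

/-- Correctness of the greedy procedure for ℓ-center clustering with `z` outliers: if some
`ℓ` balls of radius `r` centered at points `t i` cover at least `n - z` points of `P`,
then the greedy procedure (repeatedly pick the point whose radius-`r` ball contains the
most unmarked points, then mark its radius-`3r` ball) marks at least `n - z` points. -/
theorem greedy_outliers_correct {X : Type*} [MetricSpace X]
    (P : Finset X) (ℓ z : ℕ) (hℓ : 1 ≤ ℓ) (r : ℝ) (hr : 0 < r)
    (p : ℕ → X) (M : ℕ → Finset X)
    (hM0 : M 0 = ∅)
    (hpick : ∀ i < ℓ, p i ∈ P ∧
      (∀ x ∈ P, ((P.filter fun y => dist x y ≤ r) \ M i).card ≤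
        ((P.filter fun y => dist (p i) y ≤ r) \ M i).card) ∧
      M (i + 1) = M i ∪ (P.filter fun y => dist (p i) y ≤ 3 * r))
    (t : Fin ℓ → X) (ht : ∀ i, t i ∈ P)
    (hcov : P.card - z ≤ (P.filter fun q => ∃ i, dist (t i) q ≤ r).card) :
    P.card - z ≤ (M ℓ).card :=
  greedy_outliers_correct_general P ℓ z r p M hpick t ht hcov
end
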